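/- Let d ≥ 1, let 0 < r < π/4, let p₀ ∈ S^d, n ≥ 1, and ε > 0, and set σ = (4r/(nε))·(2 − 2r·cot(2r)). Let μ be the surface (spherical) measure on S^d restricted to the geodesic ball B_r(p₀). For a dataset D = {x₁,…,xₙ} ⊂ B_r(p₀) define g_D(x) = ‖(1/n)·Σ_{i=1}^{n} log_x x_i‖ for x ∈ B_r(p₀). Then for any two datasets D, D' ⊂ B_r(p₀) differing in exactly one element, and any measurable S ⊆ B_r(p₀): (∫_S e^{−g_D/σ} dμ)/(∫_{B_r(p₀)} e^{−g_D/σ} dμ) ≤ e^ε · (∫_S e^{−g_{D'}/σ} dμ)/(∫_{B_r(p₀)} e^{−g_{D'}/σ} dμ). -/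

import Mathlib

/-!
Fix `x` in the ball and write `y = cos a • x + u`, `y' = cos b • x + v` with `u, v ⊥ x`, where
`a = ρ(x, y)`, `b = ρ(x, y')`. Then
`‖log_x y - log_x y'‖² = (a - b)² + 2 (a / sin a) (b / sin b) (sin a sin b - ⟪u, v⟫)` and
`‖y - y'‖² = 4 sin² ((a - b) / 2) + 2 (sin a sin b - ⟪u, v⟫)`, so comparing term by term and using
that `θ / sin θ` is increasing on `[0, π)` (concavity of `sin`) gives
`‖log_x y - log_x y'‖ ≤ (2r / sin 2r) ‖y - y'‖ ≤ (2r / sin 2r) · 2r` for `y, y'` in the ball.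
Replacing one data point therefore moves `g_D` by at most `(2r/n)(2r / sin 2r) ≤ Δ = σε/2`
on the ball, so the unnormalised densities `e^{-g_D/σ}` and `e^{-g_{D'}/σ}` agree up to a factor
`e^{ε/2}` in either direction, and their normalisations up to `e^ε`.
-/

open MeasureTheory

/-- Geodesic distance on the unit sphere `S^d ⊂ ℝ^(d+1)`: `ρ(p,q) = arccos ⟨p,q⟩`. -/
noncomputable def sphDist {d : ℕ} (p q : EuclideanSpace ℝ (Fin (d + 1))) : ℝ :=
  Real.arccos (inner ℝ p q)

/-- Inverse exponential (log) map on the unit sphere: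
`log_p q = (θ / sin θ) (q - cos θ • p)` with `θ = ρ(p,q)` (and `log_p p = 0`). -/
noncomputable def sphLog {d : ℕ} (p q : EuclideanSpace ℝ (Fin (d + 1))) :
    EuclideanSpace ℝ (Fin (d + 1)) :=
  (sphDist p q / Real.sin (sphDist p q)) • (q - Real.cos (sphDist p q) • p)

/-- The unit sphere `S^d` as a subtype of `ℝ^(d+1)`. -/
abbrev Sph (d : ℕ) := Metric.sphere (0 : EuclideanSpace ℝ (Fin (d + 1))) 1

open Real

lemma div_sin_mul_sin_self {θ : ℝ} (h0 : 0 ≤ θ) (hπ : θ < π) : θ / sin θ * sin θ = θ := by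
  rcases h0.eq_or_lt with rfl | h0
  · simp
  exact div_mul_cancel₀ _ (sin_pos_of_pos_of_lt_pi h0 hπ).ne'

lemma div_sin_le_div_sin {R θ : ℝ} (hRπ : R < π) (hθ : 0 ≤ θ) (hθR : θ ≤ R) :
    θ / sin θ ≤ R / sin R := by
  rcases hθ.eq_or_lt with rfl | hθ
  · simpa using div_nonneg hθR (sin_nonneg_of_nonneg_of_le_pi hθR hRπ.le)
  have hR : 0 < R := hθ.trans_le hθR
  have hslope := strictConcaveOn_sin_Icc.concaveOn.slope_anti (x := 0)
    ⟨le_rfl, pi_pos.le⟩ ⟨⟨hθ.le, by linarith⟩, hθ.ne'⟩ ⟨⟨hR.le, hRπ.le⟩, hR.ne'⟩ hθR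
  simp only [slope_def_field, sin_zero, sub_zero] at hslope
  rw [div_le_div_iff₀ (sin_pos_of_pos_of_lt_pi hθ (by linarith)) (sin_pos_of_pos_of_lt_pi hR hRπ)]
  rw [div_le_div_iff₀ hR hθ] at hslope
  linarith

lemma sq_sub_le_div_sin_sq_mul {R a b : ℝ} (hRπ : R < π) (ha0 : 0 ≤ a) (ha : a ≤ R)
    (hb0 : 0 ≤ b) (hb : b ≤ R) : (a - b) ^ 2 ≤ (R / sin R) ^ 2 * (2 - 2 * cos (a - b)) := by
  set t := |a - b| / 2 with ht_def
  have ht0 : 0 ≤ t := by positivity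
  have htR : t ≤ R := by
    have := abs_sub_le_iff.2 (⟨by linarith, by linarith⟩ : a - b ≤ R ∧ b - a ≤ R)
    linarith [abs_nonneg (a - b)]
  have ht : t ≤ R / sin R * sin t :=
    calc t = t / sin t * sin t := (div_sin_mul_sin_self ht0 (by linarith)).symm
      _ ≤ R / sin R * sin t := mul_le_mul_of_nonneg_right (div_sin_le_div_sin hRπ ht0 htR)
          (sin_nonneg_of_nonneg_of_le_pi ht0 (by linarith))
  have hab : |a - b| = 2 * t := by ring
  have hcos : cos (a - b) = 1 - 2 * sin t ^ 2 := by
    rw [← cos_abs, hab, cos_two_mul, cos_sq']; ring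
  rw [← sq_abs, hab, hcos]
  nlinarith [pow_le_pow_left₀ ht0 ht 2]

lemma two_mul_div_sin_two_mul_le {r : ℝ} (hr : 0 < r) (hrπ : r < π / 2) :
    2 * r / sin (2 * r) ≤ 2 - 2 * r * (cos (2 * r) / sin (2 * r)) := by
  have hsin : 0 < sin (2 * r) := sin_pos_of_pos_of_lt_pi (by linarith) (by linarith)
  have hcos : 0 < cos r := cos_pos_of_mem_Ioo ⟨by linarith, hrπ⟩
  have htan : r * cos r ≤ sin r := by
    have := (lt_tan hr hrπ).le
    rwa [tan_eq_sin_div_cos, le_div_iff₀ hcos] at this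
  rw [div_le_iff₀ hsin, sub_mul, mul_assoc, div_mul_cancel₀ _ hsin.ne', sin_two_mul, cos_two_mul]
  nlinarith

section Sphere

variable {d : ℕ}

local notation "E" => EuclideanSpace ℝ (Fin (d + 1))

lemma sphDist_comm (p q : E) : sphDist p q = sphDist q p := by
  rw [sphDist, sphDist, real_inner_comm]

lemma sphDist_nonneg (p q : E) : 0 ≤ sphDist p q := arccos_nonneg _

lemma sphDist_eq_angle {p q : E} (hp : ‖p‖ = 1) (hq : ‖q‖ = 1) :
    sphDist p q = InnerProductGeometry.angle p q := by
  simp [sphDist, InnerProductGeometry.angle, hp, hq]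

lemma sphDist_le_sphDist_add_sphDist {p q w : E} (hp : ‖p‖ = 1) (hq : ‖q‖ = 1)
    (hw : ‖w‖ = 1) : sphDist p w ≤ sphDist p q + sphDist q w := by
  simpa only [sphDist_eq_angle, hp, hq, hw] using
    InnerProductGeometry.angle_le_angle_add_angle p q w

lemma cos_sphDist {p q : E} (hp : ‖p‖ = 1) (hq : ‖q‖ = 1) :
    cos (sphDist p q) = inner ℝ p q := by
  rw [sphDist_eq_angle hp hq, InnerProductGeometry.cos_angle, hp, hq, mul_one, div_one]

lemma sin_sphDist_nonneg (p q : E) : 0 ≤ sin (sphDist p q) :=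
  sin_nonneg_of_nonneg_of_le_pi (sphDist_nonneg p q) (arccos_le_pi _)

lemma norm_sub_le_sphDist {p q : E} (hp : ‖p‖ = 1) (hq : ‖q‖ = 1) :
    ‖p - q‖ ≤ sphDist p q := by
  have hsq : ‖p - q‖ ^ 2 = 2 - 2 * cos (sphDist p q) := by
    rw [norm_sub_sq_real, cos_sphDist hp hq, hp, hq]; ring
  have := one_sub_sq_div_two_le_cos (x := sphDist p q)
  exact le_of_sq_le_sq (by linarith) (sphDist_nonneg p q)

lemma norm_sub_cos_sphDist_smul {p q : E} (hp : ‖p‖ = 1) (hq : ‖q‖ = 1) :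
    ‖q - cos (sphDist p q) • p‖ = sin (sphDist p q) := by
  have hsq : ‖q - cos (sphDist p q) • p‖ ^ 2 = sin (sphDist p q) ^ 2 := by
    rw [norm_sub_sq_real, real_inner_smul_right, norm_smul, real_inner_comm, ← cos_sphDist hp hq,
      hp, hq, norm_eq_abs, sin_sq]
    ring_nf; rw [sq_abs]; ring
  exact (pow_left_inj₀ (norm_nonneg _) (sin_sphDist_nonneg p q) two_ne_zero).1 hsq

lemma norm_sphLog_sub_sphLog_le {R : ℝ} (hRπ : R < π) {x y y' : E} (hx : ‖x‖ = 1)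
    (hy : ‖y‖ = 1) (hy' : ‖y'‖ = 1) (ha : sphDist x y ≤ R) (hb : sphDist x y' ≤ R) :
    ‖sphLog x y - sphLog x y'‖ ≤ R / sin R * ‖y - y'‖ := by
  set K := R / sin R
  set a := sphDist x y
  set b := sphDist x y'
  set u := y - cos a • x
  set v := y' - cos b • x
  have ha0 : 0 ≤ a := sphDist_nonneg x y
  have hb0 : 0 ≤ b := sphDist_nonneg x y'
  have hαK : a / sin a ≤ K := div_sin_le_div_sin hRπ ha0 ha
  have hβK : b / sin b ≤ K := div_sin_le_div_sin hRπ hb0 hb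
  have hα0 : 0 ≤ a / sin a := div_nonneg ha0 (sin_sphDist_nonneg x y)
  have hβ0 : 0 ≤ b / sin b := div_nonneg hb0 (sin_sphDist_nonneg x y')
  have hαa : a / sin a * sin a = a := div_sin_mul_sin_self ha0 (by linarith)
  have hβb : b / sin b * sin b = b := div_sin_mul_sin_self hb0 (by linarith)
  have hu : ‖u‖ = sin a := norm_sub_cos_sphDist_smul hx hy
  have hv : ‖v‖ = sin b := norm_sub_cos_sphDist_smul hx hy'
  have hCS : inner ℝ u v ≤ sin a * sin b := hu ▸ hv ▸ real_inner_le_norm u v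
  have hlog : ‖sphLog x y - sphLog x y'‖ ^ 2 =
      a ^ 2 + b ^ 2 - 2 * (a / sin a) * (b / sin b) * inner ℝ u v := by
    rw [sphLog, sphLog, norm_sub_sq_real, norm_smul, norm_smul, real_inner_smul_left,
      real_inner_smul_right, hu, hv, norm_of_nonneg hα0, norm_of_nonneg hβ0, hαa, hβb]
    ring
  have hchord : ‖y - y'‖ ^ 2 = 2 - 2 * (cos a * cos b + inner ℝ u v) := by
    have hyx : inner ℝ y x = cos a := by rw [real_inner_comm, cos_sphDist hx hy]
    have hxy' : inner ℝ x y' = cos b := (cos_sphDist hx hy').symm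
    have huv : inner ℝ u v = inner ℝ y y' - cos a * cos b := by
      simp only [u, v, inner_sub_left, inner_sub_right, real_inner_smul_left,
        real_inner_smul_right, real_inner_self_eq_norm_sq, hx, hyx, hxy']
      ring
    rw [norm_sub_sq_real, hy, hy', huv]
    ring
  have hdiff : (a - b) ^ 2 ≤ K ^ 2 * (2 - 2 * cos (a - b)) :=
    sq_sub_le_div_sin_sq_mul hRπ ha0 ha hb0 hb
  have hsq : ‖sphLog x y - sphLog x y'‖ ^ 2 ≤ (K * ‖y - y'‖) ^ 2 := by
    have hαβ : a / sin a * (b / sin b) ≤ K ^ 2 := by nlinarith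
    have hsin : 0 ≤ sin a * sin b - inner ℝ u v := by linarith
    calc ‖sphLog x y - sphLog x y'‖ ^ 2
        = (a - b) ^ 2 + 2 * (a / sin a * (b / sin b)) * (sin a * sin b - inner ℝ u v) := by
          rw [hlog]; linear_combination (-2 * (b / sin b * sin b)) * hαa - 2 * a * hβb
      _ ≤ K ^ 2 * (2 - 2 * cos (a - b)) + 2 * K ^ 2 * (sin a * sin b - inner ℝ u v) := by
          gcongr
      _ = (K * ‖y - y'‖) ^ 2 := by rw [mul_pow, hchord, cos_sub]; ring
  exact le_of_sq_le_sq hsq (mul_nonneg (hα0.trans hαK) (norm_nonneg _))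

lemma norm_sphLog_sub_sphLog_le_of_sphDist_lt {r : ℝ} (hrπ : 2 * r < π) {p x y y' : E}
    (hp : ‖p‖ = 1) (hx : ‖x‖ = 1) (hy : ‖y‖ = 1) (hy' : ‖y'‖ = 1) (hpx : sphDist p x < r)
    (hpy : sphDist p y < r) (hpy' : sphDist p y' < r) :
    ‖sphLog x y - sphLog x y'‖ ≤ 2 * r / sin (2 * r) * (2 * r) := by
  have hball {z w : E} (hz : ‖z‖ = 1) (hw : ‖w‖ = 1) (hpz : sphDist p z < r)
      (hpw : sphDist p w < r) : sphDist z w < 2 * r := by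
    have := sphDist_le_sphDist_add_sphDist hz hp hw
    rw [sphDist_comm z p] at this
    linarith
  have hr : 0 ≤ 2 * r := by linarith [sphDist_nonneg p x]
  calc ‖sphLog x y - sphLog x y'‖ ≤ 2 * r / sin (2 * r) * ‖y - y'‖ :=
        norm_sphLog_sub_sphLog_le hrπ hx hy hy' (hball hx hy hpx hpy).le
          (hball hx hy' hpx hpy').le
    _ ≤ 2 * r / sin (2 * r) * (2 * r) :=
        mul_le_mul_of_nonneg_left ((norm_sub_le_sphDist hy hy').trans (hball hy hy' hpy hpy').le)
          (div_nonneg hr (sin_nonneg_of_nonneg_of_le_pi hr hrπ.le))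

end Sphere

lemma abs_norm_smul_sum_sub_le {ι V : Type*} [Fintype ι] [SeminormedAddCommGroup V]
    [NormedSpace ℝ V] (c : ℝ) {f f' : ι → V} {j : ι} (h : ∀ i, i ≠ j → f i = f' i) :
    |‖c • ∑ i, f i‖ - ‖c • ∑ i, f' i‖| ≤ |c| * ‖f j - f' j‖ := by
  have hsum : ∑ i, f i - ∑ i, f' i = f j - f' j := by
    rw [← Finset.sum_sub_distrib]
    exact Finset.sum_eq_single j (fun i _ hij => by rw [h i hij, sub_self]) (by simp)
  calc |‖c • ∑ i, f i‖ - ‖c • ∑ i, f' i‖| ≤ ‖c • ∑ i, f i - c • ∑ i, f' i‖ :=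
        abs_norm_sub_norm_le _ _
    _ = |c| * ‖f j - f' j‖ := by rw [← smul_sub, hsum, norm_smul, norm_eq_abs]

lemma abs_norm_mean_sphLog_sub_le {d n : ℕ} {r : ℝ} (hrπ : 2 * r < π) {p x : Sph d}
    {ys ys' : Fin n → Sph d} {j : Fin n} (hj : ∀ i, i ≠ j → ys i = ys' i)
    (hx : sphDist (p : EuclideanSpace ℝ (Fin (d + 1))) x < r)
    (hys : ∀ i, sphDist (p : EuclideanSpace ℝ (Fin (d + 1))) (ys i) < r)
    (hys' : ∀ i, sphDist (p : EuclideanSpace ℝ (Fin (d + 1))) (ys' i) < r) :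
    |‖(1 / (n : ℝ)) • ∑ i, sphLog (x : EuclideanSpace ℝ (Fin (d + 1))) (ys i)‖ -
      ‖(1 / (n : ℝ)) • ∑ i, sphLog (x : EuclideanSpace ℝ (Fin (d + 1))) (ys' i)‖| ≤
      1 / n * (2 * r / sin (2 * r) * (2 * r)) := by
  refine (abs_norm_smul_sum_sub_le _ fun i hi => by rw [hj i hi]).trans ?_
  rw [abs_of_nonneg (by positivity)]
  gcongr
  exact norm_sphLog_sub_sphLog_le_of_sphDist_lt hrπ (norm_eq_of_mem_sphere p)
    (norm_eq_of_mem_sphere x) (norm_eq_of_mem_sphere _) (norm_eq_of_mem_sphere _) hx (hys j) (hys' j)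

lemma div_le_mul_mul_div {a b a' b' c : ℝ} (ha' : 0 ≤ a') (hb : 0 ≤ b) (hb' : 0 ≤ b')
    (hc : 0 ≤ c) (ha : a ≤ c * a') (hbb' : b ≤ c * b') (hb'b : b' ≤ c * b) :
    a / b ≤ c * c * (a' / b') := by
  rcases hb.eq_or_lt with rfl | hb
  · rw [div_zero]
    positivity
  have hb'pos : 0 < b' := pos_of_mul_pos_right (hb.trans_le hbb') hc
  rw [div_le_iff₀ hb]
  calc a ≤ c * a' := ha
    _ = c * (a' / b') * b' := by field_simp
    _ ≤ c * (a' / b') * (c * b) := by gcongr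
    _ = c * c * (a' / b') * b := by ring

lemma exp_neg_div_le_exp_mul_exp_neg_div {σ t u u' : ℝ} (hσ : 0 < σ) (h : |u - u'| ≤ σ * t) :
    exp (-u / σ) ≤ exp t * exp (-u' / σ) := by
  rw [← exp_add, exp_le_exp, ← sub_le_iff_le_add, div_sub_div_same, div_le_iff₀ hσ]
  linarith [neg_abs_le (u - u')]

section KNG

variable {α : Type*} [MeasurableSpace α] {μ : Measure α}

lemma integrable_exp_neg_div [IsFiniteMeasure μ] {g : α → ℝ} (hg : Measurable g)
    (hg0 : ∀ x, 0 ≤ g x) {σ : ℝ} (hσ : 0 ≤ σ) : Integrable (fun x => exp (-g x / σ)) μ :=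
  (integrable_const 1).mono' (by fun_prop) <| ae_of_all _ fun x => by
    rw [norm_of_nonneg (exp_pos _).le, exp_le_one_iff]
    exact div_nonpos_of_nonpos_of_nonneg (neg_nonpos.2 (hg0 x)) hσ

theorem kng_privacy [IsFiniteMeasure μ] {g g' : α → ℝ} (hg : Measurable g)
    (hg' : Measurable g') (hg0 : ∀ x, 0 ≤ g x) (hg'0 : ∀ x, 0 ≤ g' x) {σ ε : ℝ} (hσ : 0 < σ)
    (hsens : ∀ᵐ x ∂μ, |g x - g' x| ≤ σ * ε / 2) (S : Set α) :
    (∫ x in S, exp (-g x / σ) ∂μ) / (∫ x, exp (-g x / σ) ∂μ) ≤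
      exp ε * ((∫ x in S, exp (-g' x / σ) ∂μ) / (∫ x, exp (-g' x / σ) ∂μ)) := by
  set c := exp (ε / 2)
  have hI := integrable_exp_neg_div (μ := μ) hg hg0 hσ.le
  have hI' := integrable_exp_neg_div (μ := μ) hg' hg'0 hσ.le
  have hle : ∀ᵐ x ∂μ, exp (-g x / σ) ≤ c * exp (-g' x / σ) :=
    hsens.mono fun x hx => exp_neg_div_le_exp_mul_exp_neg_div hσ (by rwa [← mul_div_assoc])
  have hle' : ∀ᵐ x ∂μ, exp (-g' x / σ) ≤ c * exp (-g x / σ) :=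
    hsens.mono fun x hx =>
      exp_neg_div_le_exp_mul_exp_neg_div hσ (by rwa [abs_sub_comm, ← mul_div_assoc])
  have hint {ν : Measure α} {f f' : α → ℝ} (hf : Integrable f ν) (hf' : Integrable f' ν)
      (h : ∀ᵐ x ∂ν, f x ≤ c * f' x) : ∫ x, f x ∂ν ≤ c * ∫ x, f' x ∂ν :=
    (integral_mono_ae hf (hf'.const_mul c) h).trans_eq (integral_const_mul c _)
  rw [show exp ε = c * c by rw [← exp_add, add_halves]]
  exact div_le_mul_mul_div (integral_nonneg fun _ => (exp_pos _).le)
    (integral_nonneg fun _ => (exp_pos _).le) (integral_nonneg fun _ => (exp_pos _).le)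
    (exp_pos _).le (hint hI.integrableOn hI'.integrableOn (ae_restrict_of_ae hle))
    (hint hI hI' hle) (hint hI' hI hle')

end KNG

theorem sphere_kng_mean_privacy_general (d n : ℕ)
    (r ε : ℝ) (hr0 : 0 < r) (hr : r < Real.pi / 4) (hε : 0 < ε)
    (σ : ℝ)
    (hσ : σ = 4 * r / (n * ε) * (2 - 2 * r * (Real.cos (2 * r) / Real.sin (2 * r))))
    (p₀ : Sph d) (B : Set (Sph d))
    (hB : B = {x : Sph d | sphDist (p₀ : EuclideanSpace ℝ (Fin (d + 1))) x < r})
    (μ : Measure (Sph d))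
    (hμ : μ = ((volume : Measure (EuclideanSpace ℝ (Fin (d + 1)))).toSphere).restrict B)
    (xs xs' : Fin n → Sph d) (hxs : ∀ i, xs i ∈ B) (hxs' : ∀ i, xs' i ∈ B)
    (hadj : ∃ j : Fin n, xs j ≠ xs' j ∧ ∀ i : Fin n, i ≠ j → xs i = xs' i)
    (gD gD' : Sph d → ℝ)
    (hgD : gD = fun x : Sph d => ‖(1 / (n : ℝ)) • ∑ i, sphLog (x : EuclideanSpace ℝ (Fin (d + 1))) (xs i)‖)
    (hgD' : gD' = fun x : Sph d => ‖(1 / (n : ℝ)) • ∑ i, sphLog (x : EuclideanSpace ℝ (Fin (d + 1))) (xs' i)‖)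
    (S : Set (Sph d)) :
    (∫ x in S, Real.exp (-gD x / σ) ∂μ) / (∫ x, Real.exp (-gD x / σ) ∂μ) ≤
      Real.exp ε *
        ((∫ x in S, Real.exp (-gD' x / σ) ∂μ) / (∫ x, Real.exp (-gD' x / σ) ∂μ)) := by
  obtain ⟨j, -, hj⟩ := hadj
  have hn : (0 : ℝ) < n := by exact_mod_cast j.pos
  have hK := two_mul_div_sin_two_mul_le hr0 (by linarith)
  have hσ0 : 0 < σ := by
    rw [hσ]
    exact mul_pos (by positivity) (hK.trans_lt' (div_pos (by linarith)
      (sin_pos_of_pos_of_lt_pi (by linarith) (by linarith))))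
  have hBmeas : MeasurableSet B := by rw [hB]; unfold sphDist; measurability
  have hsens : ∀ x ∈ B, |gD x - gD' x| ≤ σ * ε / 2 := by
    intro x hx
    rw [hB] at hxs hxs' hx
    calc |gD x - gD' x| ≤ 1 / n * (2 * r / sin (2 * r) * (2 * r)) := by
          rw [hgD, hgD']; exact abs_norm_mean_sphLog_sub_le (by linarith) hj hx hxs hxs'
      _ ≤ 1 / n * ((2 - 2 * r * (cos (2 * r) / sin (2 * r))) * (2 * r)) := by gcongr
      _ = σ * ε / 2 := by rw [hσ]; field_simp; ring
  subst hgD hgD' hμ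
  exact kng_privacy (by unfold sphLog sphDist; fun_prop) (by unfold sphLog sphDist; fun_prop)
    (fun _ => norm_nonneg _) (fun _ => norm_nonneg _) hσ0 (ae_restrict_of_forall_mem hBmeas hsens) S

/-- ε-differential privacy of the KNG mechanism for Fréchet mean estimation on the
unit sphere (Theorems 1 and 2 combined): with `σ = (4r/(nε))(2 − 2r·cot(2r))`, the
densities proportional to `e^{−g_D/σ}` with respect to the surface measure restricted
to `B_r(p₀)` satisfy the ε-DP inequality for adjacent datasets in `B_r(p₀)`. -/
theorem sphere_kng_mean_privacy (d n : ℕ) (hd : 1 ≤ d) (hn : 1 ≤ n)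
    (r ε : ℝ) (hr0 : 0 < r) (hr : r < Real.pi / 4) (hε : 0 < ε)
    (σ : ℝ)
    (hσ : σ = 4 * r / (n * ε) * (2 - 2 * r * (Real.cos (2 * r) / Real.sin (2 * r))))
    (p₀ : Sph d) (B : Set (Sph d))
    (hB : B = {x : Sph d | sphDist (p₀ : EuclideanSpace ℝ (Fin (d + 1))) x < r})
    (μ : Measure (Sph d))
    (hμ : μ = ((volume : Measure (EuclideanSpace ℝ (Fin (d + 1)))).toSphere).restrict B)
    (xs xs' : Fin n → Sph d) (hxs : ∀ i, xs i ∈ B) (hxs' : ∀ i, xs' i ∈ B)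
    (hadj : ∃ j : Fin n, xs j ≠ xs' j ∧ ∀ i : Fin n, i ≠ j → xs i = xs' i)
    (gD gD' : Sph d → ℝ)
    (hgD : gD = fun x : Sph d => ‖(1 / (n : ℝ)) • ∑ i, sphLog (x : EuclideanSpace ℝ (Fin (d + 1))) (xs i)‖)
    (hgD' : gD' = fun x : Sph d => ‖(1 / (n : ℝ)) • ∑ i, sphLog (x : EuclideanSpace ℝ (Fin (d + 1))) (xs' i)‖)
    (S : Set (Sph d)) (hS : S ⊆ B) (hSm : MeasurableSet S) :
    (∫ x in S, Real.exp (-gD x / σ) ∂μ) / (∫ x, Real.exp (-gD x / σ) ∂μ) ≤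
      Real.exp ε *
        ((∫ x in S, Real.exp (-gD' x / σ) ∂μ) / (∫ x, Real.exp (-gD' x / σ) ∂μ)) :=
  sphere_kng_mean_privacy_general d n r ε hr0 hr hε σ hσ p₀ B hB μ hμ xs xs' hxs hxs' hadj gD gD'
    hgD hgD' S
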